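/- arXiv:1303.2709 — 7 statements merged into one kernel-verified Lean document; each statement's English description precedes it below -/
import Mathlib

section
/- Consider a network of n agents where the adversary set A is an f'-fraction local set of Byzantine adversaries with f' ≤ f, and each normal agent i updates its state according to ARC-P with parameter f ∈ [0,1/2]. Let F_i(t) = ⌊f·d_i(t)⌋ and B = β(n − 1 − min_{i∈N, t≥0} F_i(t)). Then for every normal agent i and every t ≥ 0, the ARC-P update satisfies B(m_N(t) − x_i(t)) ≤ Σ_{j ∈ N_i^in(t)\R_i(t)} w_{(j,i)}(t)(x_{(j,i)}(t) − x_i(t)) ≤ B(M_N(t) − x_i(t)); consequently every normal state satisfies x_i(t) ∈ I_0 = [m_N(0), M_N(0)] for all t ≥ 0, i.e., the safety condition of CTRAC is ensured. -/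
/-!
A normal agent `i` discards up to `F_i(t)` of the values above its own state, and the agents it
keeps above its state convey values at most `M_N(t)`: values beyond `M_N(t)` come only from
adversaries, who are at most `F_i(t)` in number, so any one that survives removal would sit
below `F_i(t)` removed values that also exceed `M_N(t)`. At most `n - 1 - F_i(t)` agents are kept
above `x_i(t)`, each contributing at most `β (M_N(t) - x_i(t))`; negating all values gives the
lower bound. For safety, take a time `τ ≤ t` at which `M_N` is maximal on `[0, t]` and a normal
agent `j` attaining it. Then `g = x_j(τ) - x_j` satisfies `g(s) ≤ B ∫_s^τ g`, and since
`s ↦ e^{Bs} ∫_s^τ g` is nondecreasing and vanishes at `τ`, `g ≤ 0`; hence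
`x_i(t) ≤ M_N(τ) = x_j(τ) ≤ x_j(0) ≤ M_N(0)`.
-/

open Finset Filter Topology MeasureTheory

namespace ARCP

variable {n : ℕ}

/-- `R` is a valid ARC-P removal of the (up to) `F` largest neighboring values:
either there are fewer than `F` values strictly larger than the node's own value `xi`
and all of those are removed, or there are at least `F` such values and precisely a set
of `F` largest values is removed. -/
def RemovalHigh (Nin : Finset (Fin n)) (v : Fin n → ℝ) (xi : ℝ) (F : ℕ)
    (R : Finset (Fin n)) : Prop :=
  R ⊆ Nin ∧
    (((Nin.filter fun j => xi < v j).card < F ∧ R = Nin.filter fun j => xi < v j) ∨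
      (F ≤ (Nin.filter fun j => xi < v j).card ∧ R.card = F ∧
        ∀ j ∈ R, ∀ k ∈ Nin \ R, v k ≤ v j))

/-- `R` is a valid ARC-P removal of the (up to) `F` smallest neighboring values. -/
def RemovalLow (Nin : Finset (Fin n)) (v : Fin n → ℝ) (xi : ℝ) (F : ℕ)
    (R : Finset (Fin n)) : Prop :=
  R ⊆ Nin ∧
    (((Nin.filter fun j => v j < xi).card < F ∧ R = Nin.filter fun j => v j < xi) ∨
      (F ≤ (Nin.filter fun j => v j < xi).card ∧ R.card = F ∧
        ∀ j ∈ R, ∀ k ∈ Nin \ R, v j ≤ v k))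

/-- `R` is a valid set of in-neighbors removed by the ARC-P rule with threshold `F`. -/
def IsARCPRemoval (Nin : Finset (Fin n)) (v : Fin n → ℝ) (xi : ℝ) (F : ℕ)
    (R : Finset (Fin n)) : Prop :=
  ∃ Rhi Rlo : Finset (Fin n),
    R = Rhi ∪ Rlo ∧ RemovalHigh Nin v xi F Rhi ∧ RemovalLow Nin v xi F Rlo

/-- The ARC-P control input: `∑_{j ∈ Nin \ R} w j * (v j - xi)`. -/
def arcpUpdate (Nin R : Finset (Fin n)) (w : Fin n → ℝ) (v : Fin n → ℝ) (xi : ℝ) : ℝ :=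
  ∑ j ∈ Nin \ R, w j * (v j - xi)

end ARCP

theorem Finset.sup'_neg_eq_neg_inf' {ι : Type*} {s : Finset ι} (hs : s.Nonempty) (g : ι → ℝ) :
    (s.sup' hs fun j => -g j) = -s.inf' hs g := by
  refine le_antisymm (sup'_le _ _ fun j hj => neg_le_neg (inf'_le _ hj)) ?_
  obtain ⟨j, hj, hjg⟩ := exists_mem_eq_inf' hs g
  exact hjg ▸ le_sup' (fun j => -g j) hj

theorem Finset.sum_mul_sub_le_card_filter_mul {ι : Type*} {s : Finset ι} {w v : ι → ℝ}
    {xi M β : ℝ} (hw : ∀ j ∈ s, 0 ≤ w j ∧ w j ≤ β) (hv : ∀ j ∈ s, v j ≤ M) :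
    ∑ j ∈ s, w j * (v j - xi) ≤ #{j ∈ s | xi < v j} * (β * (M - xi)) := by
  rw [← sum_filter_add_sum_filter_not s (fun j => xi < v j)]
  have habove :
      ∑ j ∈ s with xi < v j, w j * (v j - xi) ≤ #{j ∈ s | xi < v j} * (β * (M - xi)) := by
    rw [← nsmul_eq_mul]
    refine sum_le_card_nsmul _ _ _ fun j hj => ?_
    obtain ⟨hjs, hxj⟩ := mem_filter.1 hj
    obtain ⟨hw0, hwβ⟩ := hw j hjs
    have hvM := hv j hjs
    calc w j * (v j - xi) ≤ β * (v j - xi) := by gcongr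
      _ ≤ β * (M - xi) := mul_le_mul_of_nonneg_left (by linarith) (hw0.trans hwβ)
  have hbelow : ∑ j ∈ s with ¬xi < v j, w j * (v j - xi) ≤ 0 := by
    refine sum_nonpos fun j hj => ?_
    obtain ⟨hjs, hxj⟩ := mem_filter.1 hj
    exact mul_nonpos_of_nonneg_of_nonpos (hw j hjs).1 (by linarith [not_lt.1 hxj])
  linarith

section

open Set

theorem nonpos_of_le_mul_integral {g : ℝ → ℝ} {a b B : ℝ} (hB : 0 ≤ B)
    (hg : ContinuousOn g (Icc a b)) (h : ∀ s ∈ Icc a b, g s ≤ B * ∫ r in s..b, g r) :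
    ∀ s ∈ Icc a b, g s ≤ 0 := by
  intro s hs
  have hab : a ≤ b := hs.1.trans hs.2
  set φ : ℝ → ℝ := fun s => Real.exp (B * s) * ∫ r in s..b, g r
  have hφ : MonotoneOn φ (Icc a b) := by
    refine monotoneOn_of_hasDerivWithinAt_nonneg (convex_Icc a b)
      (f' := fun x => Real.exp (B * x) * (B * (∫ r in x..b, g r) - g x)) ?_ (fun x hx => ?_)
      (fun x hx => mul_nonneg (Real.exp_pos _).le ?_)
    · have hprim := intervalIntegral.continuousOn_primitive_interval_left
        (μ := volume) (hg.integrableOn_Icc.mono_set (uIcc_of_le hab).subset)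
      rw [uIcc_of_le hab] at hprim
      exact (Real.continuous_exp.comp (continuous_const.mul continuous_id)).continuousOn.mul
        hprim
    · rw [interior_Icc] at hx
      have hint : HasDerivAt (fun u => ∫ r in u..b, g r) (-g x) x :=
        intervalIntegral.integral_hasDerivAt_left
          (hg.mono (uIcc_of_le hx.2.le ▸ Icc_subset_Icc_left hx.1.le)).intervalIntegrable
          ((hg.mono Ioo_subset_Icc_self).stronglyMeasurableAtFilter isOpen_Ioo x hx)
          (hg.continuousAt (Icc_mem_nhds hx.1 hx.2))
      have hexp : HasDerivAt (fun u => Real.exp (B * u)) (Real.exp (B * x) * B) x := by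
        simpa using ((hasDerivAt_id x).const_mul B).exp
      exact ((hexp.mul hint).congr_deriv (by ring)).hasDerivWithinAt
    · rw [interior_Icc] at hx
      linarith [h x (Ioo_subset_Icc_self hx)]
  have h0 : (∫ r in s..b, g r) ≤ 0 := by
    have := hφ hs (right_mem_Icc.2 hab) hs.2
    simp only [φ, intervalIntegral.integral_same, mul_zero] at this
    exact nonpos_of_mul_nonpos_right this (Real.exp_pos _)
  exact (h s hs).trans (mul_nonpos_of_nonneg_of_nonpos hB h0)

theorem continuousOn_Icc_of_eq_add_integral {y v : ℝ → ℝ} {T : ℝ} (hT : 0 ≤ T)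
    (hv : IntervalIntegrable v volume 0 T)
    (hy : ∀ t ∈ Icc 0 T, y t = y 0 + ∫ r in (0 : ℝ)..t, v r) :
    ContinuousOn y (Icc 0 T) := by
  have hprim := continuousOn_const (c := y 0).add
    (intervalIntegral.continuousOn_primitive_interval' hv left_mem_uIcc)
  rw [uIcc_of_le hT] at hprim
  exact hprim.congr hy

theorem le_sup'_zero_of_rate_le {ι : Type*} {s : Finset ι} (hs : s.Nonempty)
    {x u : ι → ℝ → ℝ} {B : ℝ} (hB : 0 ≤ B)
    (hu : ∀ i ∈ s, ∀ t, 0 ≤ t → IntervalIntegrable (u i) volume 0 t)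
    (hx : ∀ i ∈ s, ∀ t, 0 ≤ t → x i t = x i 0 + ∫ r in (0 : ℝ)..t, u i r)
    (hrate : ∀ i ∈ s, ∀ t, 0 ≤ t → u i t ≤ B * (s.sup' hs (fun j => x j t) - x i t))
    {i : ι} (hi : i ∈ s) {t : ℝ} (ht : 0 ≤ t) :
    x i t ≤ s.sup' hs fun j => x j 0 := by
  have hcont : ∀ j ∈ s, ContinuousOn (x j) (Icc 0 t) := fun j hj =>
    continuousOn_Icc_of_eq_add_integral ht (hu j hj t ht) fun r hr => hx j hj r hr.1
  obtain ⟨τ, hτ, hτmax⟩ := isCompact_Icc.exists_isMaxOn (nonempty_Icc.2 ht)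
    (ContinuousOn.finset_sup'_apply hs hcont)
  obtain ⟨j, hj, hjτ⟩ := exists_mem_eq_sup' hs fun j => x j τ
  have hdecay : ∀ r ∈ Icc 0 τ, x j τ - x j r ≤ 0 := by
    refine nonpos_of_le_mul_integral hB
      (continuousOn_const.sub ((hcont j hj).mono (Icc_subset_Icc_right hτ.2))) fun r hr => ?_
    have hr0 : 0 ≤ r := hr.1
    have hτ0 : 0 ≤ τ := hτ.1
    calc x j τ - x j r = ∫ q in r..τ, u j q := by
          rw [hx j hj τ hτ0, hx j hj r hr0,
            ← intervalIntegral.integral_interval_sub_left (hu j hj τ hτ0) (hu j hj r hr0)]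
          ring
      _ ≤ ∫ q in r..τ, B * (x j τ - x j q) := by
          refine intervalIntegral.integral_mono_on hr.2
            ((hu j hj τ hτ0).mono_set ?_) ?_ fun q hq => ?_
          · exact uIcc_subset_uIcc_right (Icc_subset_uIcc ⟨hr0, hr.2⟩)
          · refine ContinuousOn.intervalIntegrable ?_
            refine (continuousOn_const.mul (continuousOn_const.sub (hcont j hj))).mono ?_
            rw [uIcc_of_le hr.2]
            exact Icc_subset_Icc hr0 hτ.2
          · have hq : q ∈ Icc 0 t := ⟨hr0.trans hq.1, hq.2.trans hτ.2⟩
            have hmax : s.sup' hs (fun j => x j q) ≤ x j τ := hjτ ▸ hτmax hq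
            exact (hrate j hj q hq.1).trans (by gcongr)
      _ = B * ∫ q in r..τ, (x j τ - x j q) := intervalIntegral.integral_const_mul _ _
  calc x i t ≤ s.sup' hs (fun j => x j t) := le_sup' (fun j => x j t) hi
    _ ≤ s.sup' hs (fun j => x j τ) := hτmax ⟨ht, le_rfl⟩
    _ = x j τ := hjτ
    _ ≤ x j 0 := by linarith [hdecay 0 ⟨le_rfl, hτ.1⟩]
    _ ≤ s.sup' hs fun j => x j 0 := le_sup' (fun j => x j 0) hj

theorem mem_Icc_inf'_sup'_zero_of_rate_bounds {ι : Type*} {s : Finset ι} (hs : s.Nonempty)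
    {x u : ι → ℝ → ℝ} {B : ℝ} (hB : 0 ≤ B)
    (hu : ∀ i ∈ s, ∀ t, 0 ≤ t → IntervalIntegrable (u i) volume 0 t)
    (hx : ∀ i ∈ s, ∀ t, 0 ≤ t → x i t = x i 0 + ∫ r in (0 : ℝ)..t, u i r)
    (hrate : ∀ i ∈ s, ∀ t, 0 ≤ t → B * (s.inf' hs (fun j => x j t) - x i t) ≤ u i t ∧
      u i t ≤ B * (s.sup' hs (fun j => x j t) - x i t))
    {i : ι} (hi : i ∈ s) {t : ℝ} (ht : 0 ≤ t) :
    x i t ∈ Icc (s.inf' hs fun j => x j 0) (s.sup' hs fun j => x j 0) := by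
  refine ⟨?_, le_sup'_zero_of_rate_le hs hB hu hx (fun j hj r hr => (hrate j hj r hr).2) hi ht⟩
  have hneg := le_sup'_zero_of_rate_le hs hB (x := fun j t => -x j t) (u := fun j t => -u j t)
    (fun j hj r hr => (hu j hj r hr).neg)
    (fun j hj r hr => by rw [intervalIntegral.integral_neg, hx j hj r hr]; ring)
    (fun j hj r hr => by
      rw [Finset.sup'_neg_eq_neg_inf' hs fun j => x j r]
      linarith [(hrate j hj r hr).1])
    hi ht
  rw [Finset.sup'_neg_eq_neg_inf' hs fun j => x j 0] at hneg
  linarith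

end

namespace ARCP

variable {n : ℕ} {Nin R Rhi : Finset (Fin n)} {v w : Fin n → ℝ} {xi M β : ℝ} {F : ℕ}

theorem RemovalHigh.le_of_mem_sdiff (h : RemovalHigh Nin v xi F Rhi) (hxiM : xi ≤ M)
    (hadv : #{j ∈ Nin | M < v j} ≤ F) {j : Fin n} (hj : j ∈ Nin \ Rhi) : v j ≤ M := by
  by_contra! hMj
  obtain ⟨hjN, hjR⟩ := mem_sdiff.1 hj
  obtain ⟨hsub, ⟨-, rfl⟩ | ⟨-, hcard, hdom⟩⟩ := h
  · exact hjR (mem_filter.2 ⟨hjN, hxiM.trans_lt hMj⟩)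
  · have : insert j Rhi ⊆ {k ∈ Nin | M < v k} := insert_subset (mem_filter.2 ⟨hjN, hMj⟩)
      fun k hk => mem_filter.2 ⟨hsub hk, hMj.trans_le (hdom k hk j hj)⟩
    have := card_le_card this
    rw [card_insert_of_notMem hjR, hcard] at this
    omega

theorem RemovalHigh.card_filter_sdiff_le (h : RemovalHigh Nin v xi F Rhi) :
    #{j ∈ Nin \ Rhi | xi < v j} ≤ #{j ∈ Nin | xi < v j} - F := by
  obtain ⟨hsub, ⟨-, rfl⟩ | ⟨hF, hcard, hdom⟩⟩ := h
  · have : {j ∈ Nin \ {j ∈ Nin | xi < v j} | xi < v j} = ∅ :=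
      filter_eq_empty_iff.2 fun j hj hxj =>
        (mem_sdiff.1 hj).2 (mem_filter.2 ⟨(mem_sdiff.1 hj).1, hxj⟩)
    simp [this]
  · have hRH : Rhi ⊆ {j ∈ Nin | xi < v j} := by
      intro a ha
      by_contra haH
      -- otherwise all values above `xi` lie in `Rhi.erase a`, fewer than `F` of them
      have hva : v a ≤ xi := not_lt.1 fun hxa => haH (mem_filter.2 ⟨hsub ha, hxa⟩)
      have hHsub : {j ∈ Nin | xi < v j} ⊆ Rhi.erase a := by
        intro k hk
        obtain ⟨hkN, hxk⟩ := mem_filter.1 hk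
        refine mem_erase.2 ⟨fun hka => haH (hka ▸ hk), ?_⟩
        by_contra hkR
        linarith [hdom a ha k (mem_sdiff.2 ⟨hkN, hkR⟩)]
      have := card_le_card hHsub
      rw [card_erase_of_mem ha, hcard] at this
      have := card_pos.2 ⟨a, ha⟩
      omega
    calc #{j ∈ Nin \ Rhi | xi < v j} ≤ #({j ∈ Nin | xi < v j} \ Rhi) :=
          card_le_card fun j hj => by simp only [Finset.mem_sdiff, mem_filter] at hj ⊢; tauto
      _ = #{j ∈ Nin | xi < v j} - F := by rw [card_sdiff_of_subset hRH, hcard]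

theorem arcpUpdate_le_of_removalHigh (hβ : 0 ≤ β) (hw : ∀ j ∈ Nin, 0 ≤ w j ∧ w j ≤ β)
    (h : RemovalHigh Nin v xi F Rhi) (hRhi : Rhi ⊆ R) (hxiM : xi ≤ M)
    (hadv : #{j ∈ Nin | M < v j} ≤ F) :
    arcpUpdate Nin R w v xi ≤ (#{j ∈ Nin | xi < v j} - F : ℕ) * (β * (M - xi)) := by
  have hsdiff : Nin \ R ⊆ Nin \ Rhi := sdiff_subset_sdiff subset_rfl hRhi
  calc arcpUpdate Nin R w v xi ≤ #{j ∈ Nin \ R | xi < v j} * (β * (M - xi)) :=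
        sum_mul_sub_le_card_filter_mul (fun j hj => hw j (mem_sdiff.1 hj).1)
          fun j hj => h.le_of_mem_sdiff hxiM hadv (hsdiff hj)
    _ ≤ (#{j ∈ Nin | xi < v j} - F : ℕ) * (β * (M - xi)) := by
        gcongr
        exact (card_le_card (filter_subset_filter _ hsdiff)).trans h.card_filter_sdiff_le

theorem arcpUpdate_le_of_isARCPRemoval {i : Fin n} (hvi : v i = xi) (hβ : 0 ≤ β)
    (hw : ∀ j ∈ Nin, 0 ≤ w j ∧ w j ≤ β) (h : IsARCPRemoval Nin v xi F R) (hxiM : xi ≤ M)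
    (hadv : #{j ∈ Nin | M < v j} ≤ F) {Fm : ℕ} (hFm : Fm ≤ F) (hFmn : Fm < n) :
    arcpUpdate Nin R w v xi ≤ β * (n - 1 - Fm) * (M - xi) := by
  obtain ⟨Rhi, Rlo, rfl, hhi, -⟩ := h
  have habove : #{j ∈ Nin | xi < v j} ≤ n - 1 := by
    have := card_le_card (s := {j ∈ Nin | xi < v j}) (t := univ.erase i) fun j hj =>
      mem_erase.2 ⟨fun hji => (mem_filter.1 hj).2.ne' (hji ▸ hvi), mem_univ j⟩
    simpa using this
  have hcount : ((#{j ∈ Nin | xi < v j} - F : ℕ) : ℝ) ≤ n - 1 - Fm := by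
    have : ((#{j ∈ Nin | xi < v j} - F + Fm + 1 : ℕ) : ℝ) ≤ n := by
      exact_mod_cast (by omega : #{j ∈ Nin | xi < v j} - F + Fm + 1 ≤ n)
    push_cast at this
    linarith
  calc arcpUpdate Nin (Rhi ∪ Rlo) w v xi
      ≤ (#{j ∈ Nin | xi < v j} - F : ℕ) * (β * (M - xi)) :=
        arcpUpdate_le_of_removalHigh hβ hw hhi subset_union_left hxiM hadv
    _ ≤ (n - 1 - Fm) * (β * (M - xi)) := by gcongr
    _ = β * (n - 1 - Fm) * (M - xi) := by ring

theorem RemovalLow.neg (h : RemovalLow Nin v xi F R) : RemovalHigh Nin (-v) (-xi) F R := by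
  simpa [RemovalHigh, RemovalLow] using h

theorem RemovalHigh.neg (h : RemovalHigh Nin v xi F R) : RemovalLow Nin (-v) (-xi) F R := by
  simpa [RemovalHigh, RemovalLow] using h

theorem IsARCPRemoval.neg (h : IsARCPRemoval Nin v xi F R) :
    IsARCPRemoval Nin (-v) (-xi) F R := by
  obtain ⟨Rhi, Rlo, rfl, hhi, hlo⟩ := h
  exact ⟨Rlo, Rhi, union_comm _ _, hlo.neg, hhi.neg⟩

theorem arcpUpdate_neg : arcpUpdate Nin R w (-v) (-xi) = -arcpUpdate Nin R w v xi := by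
  simp only [arcpUpdate, Pi.neg_apply, ← sum_neg_distrib]
  exact sum_congr rfl fun j _ => by ring

theorem arcpUpdate_bounds (Normal : Finset (Fin n)) (hNe : Normal.Nonempty)
    {y : Fin n → ℝ} {i : Fin n} (hi : i ∈ Normal) (hv : ∀ j ∈ Normal, v j = y j)
    (hβ : 0 ≤ β) (hw : ∀ j ∈ Nin, 0 ≤ w j ∧ w j ≤ β) (h : IsARCPRemoval Nin v (y i) F R)
    (hadv : #{j ∈ Nin | j ∉ Normal} ≤ F) {Fm : ℕ} (hFm : Fm ≤ F) (hFmn : Fm < n) :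
    β * (n - 1 - Fm) * (Normal.inf' hNe y - y i) ≤ arcpUpdate Nin R w v (y i) ∧
      arcpUpdate Nin R w v (y i) ≤ β * (n - 1 - Fm) * (Normal.sup' hNe y - y i) := by
  have hadv' : ∀ (p : ℝ → Prop) [DecidablePred p], (∀ j ∈ Normal, ¬p (y j)) →
      #{j ∈ Nin | p (v j)} ≤ F := by
    intro p _ hp
    refine (card_le_card fun j hj => ?_).trans hadv
    simp only [mem_filter] at hj ⊢
    exact ⟨hj.1, fun hjN => hp j hjN (hv j hjN ▸ hj.2)⟩
  constructor
  · have hlo := arcpUpdate_le_of_isARCPRemoval (i := i) (by simp [hv i hi]) hβ hw h.neg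
      (neg_le_neg (inf'_le y hi))
      (hadv' (fun a => -Normal.inf' hNe y < -a) fun j hj => not_lt.2 (neg_le_neg (inf'_le y hj)))
      hFm hFmn
    rw [arcpUpdate_neg] at hlo
    linarith
  · exact arcpUpdate_le_of_isARCPRemoval (hv i hi) hβ hw h (le_sup' y hi)
      (hadv' (Normal.sup' hNe y < ·) fun j hj => not_lt.2 (le_sup' y hj)) hFm hFmn

theorem floor_mul_card_lt {f : ℝ} (hf : f ≤ 1 / 2) (hn : n ≠ 0) (s : Finset (Fin n)) :
    ⌊f * #s⌋₊ < n := by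
  have hs : (#s : ℝ) ≤ n := by exact_mod_cast (card_le_univ s).trans_eq (Fintype.card_fin n)
  have hn' : (0 : ℝ) < n := by exact_mod_cast Nat.pos_of_ne_zero hn
  rw [Nat.floor_lt' hn]
  calc f * #s ≤ 1 / 2 * n := by gcongr
    _ < n := by linarith

end ARCP

theorem stmt0_general {n : ℕ}
    (Nin : ℝ → Fin n → Finset (Fin n))               -- time-varying in-neighborhoods
    (Normal : Finset (Fin n)) (hNe : Normal.Nonempty)
    (f f' : ℝ) (hf : f ∈ Set.Icc (0 : ℝ) (1 / 2)) (hf' : f' ≤ f)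
    (x : Fin n → ℝ → ℝ)                              -- agents' states
    (xc : Fin n → Fin n → ℝ → ℝ)                     -- value conveyed by j intended for i
    (hxc : ∀ j ∈ Normal, ∀ i, xc j i = x j)          -- normal agents convey their own state
    -- the adversary set (the non-normal agents) is an f'-fraction local set:
    (hlocal : ∀ t : ℝ, ∀ i ∈ Normal,
      ((Nin t i).filter fun j => j ∉ Normal).card ≤ ⌊f' * (((Nin t i).card : ℝ))⌋₊)
    (α β : ℝ) (hα : 0 < α) (hαβ : α ≤ β)
    (w : ℝ → Fin n → Fin n → ℝ)
    (hw : ∀ t : ℝ, ∀ i ∈ Normal, ∀ j ∈ Nin t i, α ≤ w t j i ∧ w t j i ≤ β)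
    (R : ℝ → Fin n → Finset (Fin n))
    -- R t i is a valid ARC-P removal with parameter f, i.e. F_i(t) = ⌊f ⬝ d_i(t)⌋
    (hR : ∀ t : ℝ, ∀ i ∈ Normal,
      ARCP.IsARCPRemoval (Nin t i) (fun j => xc j i t) (x i t)
        (⌊f * (((Nin t i).card : ℝ))⌋₊) (R t i))
    -- Carathéodory solution (integral form) for each normal agent
    (hint : ∀ i ∈ Normal, ∀ t : ℝ, 0 ≤ t → IntervalIntegrable
      (fun s => ARCP.arcpUpdate (Nin s i) (R s i) (fun j => w s j i)
        (fun j => xc j i s) (x i s)) volume 0 t)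
    (hsol : ∀ i ∈ Normal, ∀ t : ℝ, 0 ≤ t →
      x i t = x i 0 + ∫ s in (0 : ℝ)..t,
        ARCP.arcpUpdate (Nin s i) (R s i) (fun j => w s j i) (fun j => xc j i s) (x i s))
    -- the constant B = β (n - 1 - min_{i ∈ N, t ≥ 0} F_i(t))
    (Fmin : ℕ)
    (hFmin : Fmin = sInf {k : ℕ | ∃ i ∈ Normal, ∃ t : ℝ, 0 ≤ t ∧
      k = ⌊f * (((Nin t i).card : ℝ))⌋₊})
    (B : ℝ) (hB : B = β * ((n : ℝ) - 1 - (Fmin : ℝ))) :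
    (∀ i ∈ Normal, ∀ t : ℝ, 0 ≤ t →
      B * ((Normal.inf' hNe fun j => x j t) - x i t) ≤
        ARCP.arcpUpdate (Nin t i) (R t i) (fun j => w t j i) (fun j => xc j i t) (x i t) ∧
      ARCP.arcpUpdate (Nin t i) (R t i) (fun j => w t j i) (fun j => xc j i t) (x i t) ≤
        B * ((Normal.sup' hNe fun j => x j t) - x i t)) ∧
    (∀ i ∈ Normal, ∀ t : ℝ, 0 ≤ t →
      x i t ∈ Set.Icc (Normal.inf' hNe fun j => x j 0) (Normal.sup' hNe fun j => x j 0)) := by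
  have hβ : 0 ≤ β := hα.le.trans hαβ
  have hFmin_le : ∀ i ∈ Normal, ∀ t : ℝ, 0 ≤ t → Fmin ≤ ⌊f * (((Nin t i).card : ℝ))⌋₊ :=
    fun i hi t ht => hFmin ▸ Nat.sInf_le ⟨i, hi, t, ht, rfl⟩
  have hFmin_lt : Fmin < n := by
    obtain ⟨i, hi⟩ := hNe
    exact (hFmin_le i hi 0 le_rfl).trans_lt (ARCP.floor_mul_card_lt hf.2 (Fin.pos i).ne' _)
  have hB0 : 0 ≤ B := by
    have : (Fmin : ℝ) + 1 ≤ n := by exact_mod_cast hFmin_lt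
    rw [hB]
    exact mul_nonneg hβ (by linarith)
  subst hB
  have hrate := fun i (hi : i ∈ Normal) t (ht : 0 ≤ t) =>
    ARCP.arcpUpdate_bounds Normal hNe hi (fun j hj => congrFun (hxc j hj i) t) hβ
      (fun j hj => ⟨hα.le.trans (hw t i hi j hj).1, (hw t i hi j hj).2⟩) (hR t i hi)
      ((hlocal t i hi).trans (Nat.floor_le_floor (by gcongr))) (hFmin_le i hi t ht) hFmin_lt
  exact ⟨hrate, fun i hi t ht =>
    mem_Icc_inf'_sup'_zero_of_rate_bounds hNe hB0 hint hsol hrate hi ht⟩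

/-- Lemma 1 of the paper: under the `f'`-fraction local Byzantine model
with `f' ≤ f`, the ARC-P update of every normal agent `i` is bounded between
`B (m_N(t) - x_i(t))` and `B (M_N(t) - x_i(t))`, where
`B = β (n - 1 - min_{i ∈ N, t ≥ 0} F_i(t))`; consequently every normal state remains in
`[m_N(0), M_N(0)]` (the safety condition of CTRAC). -/
theorem stmt0 {n : ℕ}
    (Nin : ℝ → Fin n → Finset (Fin n))               -- time-varying in-neighborhoods
    (Normal : Finset (Fin n)) (hNe : Normal.Nonempty)
    (f f' : ℝ) (hf : f ∈ Set.Icc (0 : ℝ) (1 / 2)) (hf'0 : 0 ≤ f') (hf' : f' ≤ f)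
    (x : Fin n → ℝ → ℝ)                              -- agents' states
    (xc : Fin n → Fin n → ℝ → ℝ)                     -- value conveyed by j intended for i
    (hxc : ∀ j ∈ Normal, ∀ i, xc j i = x j)          -- normal agents convey their own state
    (hbyz : ∀ j i, Continuous (xc j i))              -- (Byzantine) trajectories continuous
    -- the adversary set (the non-normal agents) is an f'-fraction local set:
    (hlocal : ∀ t : ℝ, ∀ i ∈ Normal,
      ((Nin t i).filter fun j => j ∉ Normal).card ≤ ⌊f' * (((Nin t i).card : ℝ))⌋₊)
    (α β : ℝ) (hα : 0 < α) (hαβ : α ≤ β)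
    (w : ℝ → Fin n → Fin n → ℝ)
    (hw : ∀ t : ℝ, ∀ i ∈ Normal, ∀ j ∈ Nin t i, α ≤ w t j i ∧ w t j i ≤ β)
    (R : ℝ → Fin n → Finset (Fin n))
    -- R t i is a valid ARC-P removal with parameter f, i.e. F_i(t) = ⌊f ⬝ d_i(t)⌋
    (hR : ∀ t : ℝ, ∀ i ∈ Normal,
      ARCP.IsARCPRemoval (Nin t i) (fun j => xc j i t) (x i t)
        (⌊f * (((Nin t i).card : ℝ))⌋₊) (R t i))
    -- Carathéodory solution (integral form) for each normal agent
    (hint : ∀ i ∈ Normal, ∀ t : ℝ, 0 ≤ t → IntervalIntegrable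
      (fun s => ARCP.arcpUpdate (Nin s i) (R s i) (fun j => w s j i)
        (fun j => xc j i s) (x i s)) volume 0 t)
    (hsol : ∀ i ∈ Normal, ∀ t : ℝ, 0 ≤ t →
      x i t = x i 0 + ∫ s in (0 : ℝ)..t,
        ARCP.arcpUpdate (Nin s i) (R s i) (fun j => w s j i) (fun j => xc j i s) (x i s))
    -- the constant B = β (n - 1 - min_{i ∈ N, t ≥ 0} F_i(t))
    (Fmin : ℕ)
    (hFmin : Fmin = sInf {k : ℕ | ∃ i ∈ Normal, ∃ t : ℝ, 0 ≤ t ∧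
      k = ⌊f * (((Nin t i).card : ℝ))⌋₊})
    (B : ℝ) (hB : B = β * ((n : ℝ) - 1 - (Fmin : ℝ))) :
    (∀ i ∈ Normal, ∀ t : ℝ, 0 ≤ t →
      B * ((Normal.inf' hNe fun j => x j t) - x i t) ≤
        ARCP.arcpUpdate (Nin t i) (R t i) (fun j => w t j i) (fun j => xc j i t) (x i t) ∧
      ARCP.arcpUpdate (Nin t i) (R t i) (fun j => w t j i) (fun j => xc j i t) (x i t) ≤
        B * ((Normal.sup' hNe fun j => x j t) - x i t)) ∧
    (∀ i ∈ Normal, ∀ t : ℝ, 0 ≤ t →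
      x i t ∈ Set.Icc (Normal.inf' hNe fun j => x j 0) (Normal.sup' hNe fun j => x j 0)) :=
  stmt0_general Nin Normal hNe f f' hf hf' x xc hxc hlocal α β hα hαβ w hw R hR hint hsol Fmin hFmin
    B hB
end

section
/- Consider a normal node i using ARC-P with parameter f ∈ [0,1/2] in a network whose adversary set A is an f'-fraction local set of Byzantine adversaries with f' ≤ f. Then at every time t, every in-neighbor value that node i keeps (i.e., every x_{(j,i)}(t) with j ∈ N_i^in(t)\R_i(t)) satisfies m_N(t) ≤ x_{(j,i)}(t) ≤ M_N(t), where M_N(t) and m_N(t) are the maximum and minimum of the normal agents' states at time t. -/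
open Finset

/-- if the adversary set is an `f'`-fraction local set (`f' ≤ f`) of
Byzantine adversaries and normal node `i` applies the ARC-P removal rule with parameter
`f ∈ [0,1/2]`, then every kept in-neighbor value `v j`, `j ∈ N_i^in \ R_i(t)`, satisfies
`m_N(t) ≤ v j ≤ M_N(t)`. -/
theorem stmt1 {n : ℕ}
    (Nin : Fin n → Finset (Fin n))                  -- in-neighborhoods at time t
    (Normal : Finset (Fin n)) (hNe : Normal.Nonempty)
    (f f' : ℝ) (hf : f ∈ Set.Icc (0 : ℝ) (1 / 2)) (hf'0 : 0 ≤ f') (hf' : f' ≤ f)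
    (xstate : Fin n → ℝ)                            -- the agents' states at time t
    (i : Fin n) (hi : i ∈ Normal)
    (v : Fin n → ℝ)                                 -- values conveyed to i at time t
    (hv : ∀ j ∈ Normal, v j = xstate j)             -- normal agents convey their state
    -- the adversary set (the non-normal agents) is an f'-fraction local set:
    (hlocal : ∀ i' ∈ Normal,
      ((Nin i').filter fun j => j ∉ Normal).card ≤ ⌊f' * (((Nin i').card : ℝ))⌋₊)
    (R : Finset (Fin n))
    (hR : ARCP.IsARCPRemoval (Nin i) v (xstate i) (⌊f * (((Nin i).card : ℝ))⌋₊) R) :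
    ∀ j ∈ (Nin i) \ R,
      (Normal.inf' hNe xstate) ≤ v j ∧ v j ≤ Normal.sup' hNe xstate := by
  obtain ⟨Rhi, Rlo, hRu, ⟨hhiS, hhi⟩, ⟨hloS, hlo⟩⟩ := hR
  set F := ⌊f * (((Nin i).card : ℝ))⌋₊ with hFdef
  have hA : ((Nin i).filter fun j => j ∉ Normal).card ≤ F := by
    refine le_trans (hlocal i hi) (Nat.floor_le_floor ?_)
    exact mul_le_mul_of_nonneg_right hf' (Nat.cast_nonneg _)
  have hM : ∀ k ∈ Normal, xstate k ≤ Normal.sup' hNe xstate :=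
    fun k hk => Finset.le_sup' _ hk
  have hm : ∀ k ∈ Normal, Normal.inf' hNe xstate ≤ xstate k :=
    fun k hk => Finset.inf'_le _ hk
  intro j hj
  rw [Finset.mem_sdiff] at hj
  obtain ⟨hjN, hjR⟩ := hj
  have hjhi : j ∉ Rhi := fun h => hjR (hRu ▸ Finset.mem_union_left _ h)
  have hjlo : j ∉ Rlo := fun h => hjR (hRu ▸ Finset.mem_union_right _ h)
  have key : ∀ (S : Finset (Fin n)), S ⊆ Nin i → S.card = F → j ∉ S →
      (∀ k ∈ S, k ∉ Normal) → j ∉ Normal → False := by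
    intro S hS hcard hjS hSA hjA
    have hsub : insert j S ⊆ (Nin i).filter fun k => k ∉ Normal := by
      intro k hk
      rcases Finset.mem_insert.mp hk with rfl | hk
      · exact Finset.mem_filter.mpr ⟨hjN, hjA⟩
      · exact Finset.mem_filter.mpr ⟨hS hk, hSA k hk⟩
    have := Finset.card_le_card hsub
    rw [Finset.card_insert_of_notMem hjS, hcard] at this
    omega
  constructor
  · by_contra hcon
    push_neg at hcon
    have hjA : j ∉ Normal := fun hjn => absurd (hm j hjn) (by rw [← hv j hjn]; exact not_le.mpr hcon)
    have hxi : Normal.inf' hNe xstate ≤ xstate i := hm i hi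
    rcases hlo with ⟨_, hRloEq⟩ | ⟨_, hcard, hmin⟩
    · exact hjlo (hRloEq ▸ Finset.mem_filter.mpr ⟨hjN, lt_of_lt_of_le hcon hxi⟩)
    · refine key Rlo hloS hcard hjlo ?_ hjA
      intro k hk hkn
      have h1 : v k ≤ v j := hmin k hk j (Finset.mem_sdiff.mpr ⟨hjN, hjlo⟩)
      have h2 : Normal.inf' hNe xstate ≤ v k := by rw [hv k hkn]; exact hm k hkn
      exact absurd (lt_of_le_of_lt (h2.trans h1) hcon) (lt_irrefl _)
  · by_contra hcon
    push_neg at hcon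
    have hjA : j ∉ Normal := fun hjn => absurd (hM j hjn) (by rw [← hv j hjn]; exact not_le.mpr hcon)
    have hxi : xstate i ≤ Normal.sup' hNe xstate := hM i hi
    rcases hhi with ⟨_, hRhiEq⟩ | ⟨_, hcard, hmax⟩
    · exact hjhi (hRhiEq ▸ Finset.mem_filter.mpr ⟨hjN, lt_of_le_of_lt hxi hcon⟩)
    · refine key Rhi hhiS hcard hjhi ?_ hjA
      intro k hk hkn
      have h1 : v j ≤ v k := hmax k hk j (Finset.mem_sdiff.mpr ⟨hjN, hjhi⟩)
      have h2 : v k ≤ Normal.sup' hNe xstate := by rw [hv k hkn]; exact hM k hkn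
      exact absurd (lt_of_lt_of_le hcon (h1.trans h2)) (lt_irrefl _)
end

section
/- Let x_1, …, x_N : [0,∞) → ℝ be absolutely continuous functions and B > 0 a constant such that for each i and almost every t ≥ 0, B(min_j x_j(t) − x_i(t)) ≤ ẋ_i(t) ≤ B(max_j x_j(t) − x_i(t)). Then M(t) = max_j x_j(t) is nonincreasing in t and m(t) = min_j x_j(t) is nondecreasing in t; in particular, x_i(t) ∈ [m(0), M(0)] for every i and every t ≥ 0, and both M(t) and m(t) converge to finite limits as t → ∞. -/
/-!
Each `x_i` is absolutely continuous, hence so is `M = max_j x_j`, and `M(t) - M(s) = ∫_s^t M'`.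
At almost every `t` all `x_i` and `M` are differentiable; if `x_i(t) = M(t)`, then `M - x_i ≥ 0`
has a minimum at `t`, so `M'(t) = ẋ_i(t) ≤ B (M(t) - x_i(t)) = 0`. Hence `M` is nonincreasing.
Applied to `-x` this shows that `m` is nondecreasing, and since `m ≤ M` both are bounded and
converge.
-/

open Filter Topology MeasureTheory Set

theorem Real.iSup_neg_eq_neg_iInf {ι : Sort*} (f : ι → ℝ) : (⨆ i, -f i) = -⨅ i, f i := by
  rw [iInf, Real.sInf_def, neg_neg, iSup]
  congr 1
  ext
  simp [neg_eq_iff_eq_neg]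

section MonotoneConvergence

variable {α β : Type*} [LinearOrder α] [ConditionallyCompleteLinearOrder β]
  [TopologicalSpace β] [OrderTopology β] {f : α → β} {a : α}

theorem MonotoneOn.exists_tendsto_atTop (hf : MonotoneOn f (Ici a)) (hbdd : BddAbove (f '' Ici a)) :
    ∃ L, Tendsto f atTop (𝓝 L) := by
  have hg : Monotone fun t => f (max a t) :=
    fun s t hst => hf le_sup_left le_sup_left (max_le_max le_rfl hst)
  refine ⟨_, (tendsto_atTop_ciSup hg ?_).congr' ?_⟩
  · exact hbdd.mono (range_subset_iff.2 fun t => mem_image_of_mem f le_sup_left)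
  · filter_upwards [eventually_ge_atTop a] with t ht
    rw [max_eq_right ht]

theorem AntitoneOn.exists_tendsto_atTop (hf : AntitoneOn f (Ici a)) (hbdd : BddBelow (f '' Ici a)) :
    ∃ L, Tendsto f atTop (𝓝 L) :=
  hf.dual_right.exists_tendsto_atTop hbdd

end MonotoneConvergence

theorem HasDerivAt.eq_of_eventually_le_of_eq {f g : ℝ → ℝ} {f' g' t : ℝ}
    (hf : HasDerivAt f f' t) (hg : HasDerivAt g g' t) (hle : ∀ᶠ s in 𝓝 t, f s ≤ g s)
    (heq : f t = g t) : f' = g' := by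
  have hmin : IsLocalMin (g - f) t :=
    hle.mono fun s hs => by simp only [Pi.sub_apply]; linarith
  linarith [hmin.hasDerivAt_eq_zero (hg.sub hf)]

theorem AbsolutelyContinuousOnInterval.congr {X : Type*} [PseudoMetricSpace X] {f g : ℝ → X}
    {a b : ℝ} (hf : AbsolutelyContinuousOnInterval f a b) (hfg : EqOn f g (uIcc a b)) :
    AbsolutelyContinuousOnInterval g a b := by
  refine hf.congr' (eventually_inf_principal.2 (Eventually.of_forall fun E hE => ?_))
  exact Finset.sum_congr rfl fun k hk => by rw [hfg (hE.1 k hk).1, hfg (hE.1 k hk).2]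

section IntegralRepresentation

variable {f f' : ℝ → ℝ} {a b : ℝ}

theorem absolutelyContinuousOnInterval_of_eqOn_add_integral
    (hf' : IntervalIntegrable f' volume a b)
    (hf : EqOn f (fun t => f a + ∫ s in a..t, f' s) (uIcc a b)) :
    AbsolutelyContinuousOnInterval f a b := by
  have hconst : AbsolutelyContinuousOnInterval (fun _ => f a) a b :=
    (LipschitzWith.const (f a)).lipschitzOnWith.absolutelyContinuousOnInterval
  exact (hconst.fun_add (hf'.absolutelyContinuousOnInterval_intervalIntegral left_mem_uIcc)).congr
    hf.symm

theorem ae_hasDerivAt_of_eqOn_add_integral (hab : a ≤ b) (hf' : IntervalIntegrable f' volume a b)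
    (hf : EqOn f (fun t => f a + ∫ s in a..t, f' s) (Icc a b)) :
    ∀ᵐ t, t ∈ Ioo a b → HasDerivAt f (f' t) t := by
  filter_upwards [hf'.ae_hasDerivAt_integral] with t ht hto
  have htab : t ∈ uIcc a b := by rw [uIcc_of_le hab]; exact Ioo_subset_Icc_self hto
  refine ((ht htab a left_mem_uIcc).const_add (f a)).congr_of_eventuallyEq ?_
  filter_upwards [Icc_mem_nhds hto.1 hto.2] with s hs using hf hs

end IntegralRepresentation

section FiniteSupremum

variable {ι : Type*} [Fintype ι] [Nonempty ι]

theorem ciSup_le_ciSup_add_sum_abs_sub (u v : ι → ℝ) :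
    ⨆ i, u i ≤ (⨆ i, v i) + ∑ i, |u i - v i| := by
  refine ciSup_le fun i => ?_
  calc u i ≤ v i + |u i - v i| := by linarith [le_abs_self (u i - v i)]
    _ ≤ (⨆ i, v i) + ∑ i, |u i - v i| :=
      add_le_add (le_ciSup (Finite.bddAbove_range v) i)
        (Finset.single_le_sum (fun j _ => abs_nonneg (u j - v j)) (Finset.mem_univ i))

theorem dist_ciSup_ciSup_le_sum (u v : ι → ℝ) :
    dist (⨆ i, u i) (⨆ i, v i) ≤ ∑ i, dist (u i) (v i) := by
  simp only [Real.dist_eq]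
  refine abs_sub_le_iff.2 ⟨?_, ?_⟩
  · linarith [ciSup_le_ciSup_add_sum_abs_sub u v]
  · have := ciSup_le_ciSup_add_sum_abs_sub v u
    simp only [abs_sub_comm (v _)] at this
    linarith

theorem AbsolutelyContinuousOnInterval.ciSup {f : ι → ℝ → ℝ} {a b : ℝ}
    (hf : ∀ i, AbsolutelyContinuousOnInterval (f i) a b) :
    AbsolutelyContinuousOnInterval (fun t => ⨆ i, f i t) a b := by
  refine squeeze_zero (fun E => Finset.sum_nonneg fun _ _ => dist_nonneg) (fun E => ?_)
    (by simpa using tendsto_finsetSum Finset.univ fun i _ => hf i)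
  rw [Finset.sum_comm]
  exact Finset.sum_le_sum fun k _ => dist_ciSup_ciSup_le_sum _ _

theorem ciSup_le_ciSup_of_deriv_nonpos_at_argmax {f f' : ι → ℝ → ℝ} {a b : ℝ}
    (hab : a ≤ b) (hf : ∀ i, AbsolutelyContinuousOnInterval (f i) a b)
    (hderiv : ∀ i, ∀ᵐ t, t ∈ Ioo a b → HasDerivAt (f i) (f' i t) t)
    (hmax : ∀ i, ∀ᵐ t, t ∈ Ioo a b → f i t = ⨆ j, f j t → f' i t ≤ 0) :
    ⨆ i, f i b ≤ ⨆ i, f i a := by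
  set M := fun t => ⨆ i, f i t
  have hM : AbsolutelyContinuousOnInterval M a b := .ciSup hf
  have hM' : ∀ᵐ t ∂volume.restrict (Ioo a b), deriv M t ≤ 0 := by
    rw [ae_restrict_iff' measurableSet_Ioo]
    filter_upwards [hM.ae_differentiableAt, ae_all_iff.2 hderiv, ae_all_iff.2 hmax]
      with t hMt hft hmaxt ht
    obtain ⟨i, hi⟩ := exists_eq_ciSup_of_finite (f := fun j => f j t)
    have hle : ∀ s, f i s ≤ M s :=
      fun s => le_ciSup (Finite.bddAbove_range fun j => f j s) i
    have hMt' := (hMt (by rw [uIcc_of_le hab]; exact Ioo_subset_Icc_self ht)).hasDerivAt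
    rw [← (hft i ht).eq_of_eventually_le_of_eq hMt' (.of_forall hle) hi]
    exact hmaxt i ht hi
  have hFTC := hM.integral_deriv_eq_sub
  rw [intervalIntegral.integral_of_le hab, integral_Ioc_eq_integral_Ioo] at hFTC
  linarith [integral_nonpos_of_ae hM']

theorem antitoneOn_ciSup_of_eq_add_integral {x x' : ι → ℝ → ℝ}
    (hint : ∀ i, ∀ t : ℝ, 0 ≤ t → IntervalIntegrable (x' i) volume 0 t)
    (hsol : ∀ i, ∀ t : ℝ, 0 ≤ t → x i t = x i 0 + ∫ s in (0 : ℝ)..t, x' i s)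
    (hmax : ∀ i, ∀ᵐ t ∂volume.restrict (Ici 0), x i t = ⨆ j, x j t → x' i t ≤ 0) :
    AntitoneOn (fun t => ⨆ j, x j t) (Ici 0) := by
  intro s (hs : 0 ≤ s) r (hr : 0 ≤ r) hsr
  have hsol' : ∀ i, EqOn (x i) (fun t => x i 0 + ∫ u in (0 : ℝ)..t, x' i u) (Icc 0 r) :=
    fun i t ht => hsol i t ht.1
  refine ciSup_le_ciSup_of_deriv_nonpos_at_argmax (f' := x') hsr (fun i => ?_) (fun i => ?_)
    (fun i => ?_)
  · refine (absolutelyContinuousOnInterval_of_eqOn_add_integral (hint i r hr) ?_).mono ?_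
    · rw [uIcc_of_le hr]; exact hsol' i
    · rw [uIcc_of_le hsr, uIcc_of_le hr]; exact Icc_subset_Icc_left hs
  · filter_upwards [ae_hasDerivAt_of_eqOn_add_integral hr (hint i r hr) (hsol' i)]
      with t ht hto using ht ⟨hs.trans_lt hto.1, hto.2⟩
  · filter_upwards [(ae_restrict_iff' measurableSet_Ici).1 (hmax i)]
      with t ht hto using ht (hs.trans hto.1.le)

end FiniteSupremum

theorem stmt2_general {N : ℕ} (B : ℝ)
    (x x' : Fin N → ℝ → ℝ)
    (hint : ∀ i, ∀ t : ℝ, 0 ≤ t → IntervalIntegrable (x' i) volume 0 t)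
    (hsol : ∀ i, ∀ t : ℝ, 0 ≤ t → x i t = x i 0 + ∫ s in (0 : ℝ)..t, x' i s)
    (hbound : ∀ i, ∀ᵐ t ∂(volume.restrict (Set.Ici (0 : ℝ))),
      B * ((⨅ j, x j t) - x i t) ≤ x' i t ∧ x' i t ≤ B * ((⨆ j, x j t) - x i t)) :
    AntitoneOn (fun t => ⨆ j, x j t) (Set.Ici (0 : ℝ)) ∧
    MonotoneOn (fun t => ⨅ j, x j t) (Set.Ici (0 : ℝ)) ∧
    (∀ i, ∀ t : ℝ, 0 ≤ t → x i t ∈ Set.Icc (⨅ j, x j 0) (⨆ j, x j 0)) ∧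
    (∃ LM : ℝ, Tendsto (fun t => ⨆ j, x j t) atTop (𝓝 LM)) ∧
    (∃ Lm : ℝ, Tendsto (fun t => ⨅ j, x j t) atTop (𝓝 Lm)) := by
  rcases isEmpty_or_nonempty (Fin N) with hN | hN
  · simp [antitoneOn_const, monotoneOn_const]
  have hM : AntitoneOn (fun t => ⨆ j, x j t) (Ici 0) :=
    antitoneOn_ciSup_of_eq_add_integral hint hsol fun i => (hbound i).mono fun t ht hi => by
      simpa [← hi] using ht.2
  have hm : MonotoneOn (fun t => ⨅ j, x j t) (Ici 0) := by
    have h := antitoneOn_ciSup_of_eq_add_integral (x := fun i t => -x i t)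
      (x' := fun i t => -x' i t) (fun i t ht => (hint i t ht).neg)
      (fun i t ht => by simp only [intervalIntegral.integral_neg]; linarith [hsol i t ht])
      fun i => (hbound i).mono fun t ht hi => by
        rw [Real.iSup_neg_eq_neg_iInf, neg_inj] at hi
        simpa [← hi] using ht.1
    simp only [Real.iSup_neg_eq_neg_iInf] at h
    exact fun s hs r hr hsr => neg_le_neg_iff.1 (h hs hr hsr)
  have hmM : ∀ t, (⨅ j, x j t) ≤ ⨆ j, x j t := fun t =>
    ciInf_le_ciSup (Finite.bddBelow_range _) (Finite.bddAbove_range _)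
  refine ⟨hM, hm, fun i t ht => ⟨?_, ?_⟩, hM.exists_tendsto_atTop ?_,
    hm.exists_tendsto_atTop ?_⟩
  · exact (hm self_mem_Ici ht ht).trans (ciInf_le (Finite.bddBelow_range _) i)
  · exact (le_ciSup (Finite.bddAbove_range _) i).trans (hM self_mem_Ici ht ht)
  · exact ⟨_, forall_mem_image.2 fun t ht => (hm self_mem_Ici ht ht).trans (hmM t)⟩
  · exact ⟨_, forall_mem_image.2 fun t ht => (hmM t).trans (hM self_mem_Ici ht ht)⟩

/-- if `x_1, …, x_N` are absolutely continuous on `[0,∞)` (expressed by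
the fundamental theorem of calculus with a locally integrable a.e. derivative `x'`) and
`B (min_j x_j(t) - x_i(t)) ≤ ẋ_i(t) ≤ B (max_j x_j(t) - x_i(t))` for a.e. `t ≥ 0`,
then `M(t) = max_j x_j(t)` is nonincreasing, `m(t) = min_j x_j(t)` is nondecreasing,
every `x_i(t)` stays in `[m(0), M(0)]`, and `M` and `m` converge to finite limits. -/
theorem stmt2 {N : ℕ} (hN : 0 < N) (B : ℝ) (hB : 0 < B)
    (x x' : Fin N → ℝ → ℝ)
    (hint : ∀ i, ∀ t : ℝ, 0 ≤ t → IntervalIntegrable (x' i) volume 0 t)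
    (hsol : ∀ i, ∀ t : ℝ, 0 ≤ t → x i t = x i 0 + ∫ s in (0 : ℝ)..t, x' i s)
    (hbound : ∀ i, ∀ᵐ t ∂(volume.restrict (Set.Ici (0 : ℝ))),
      B * ((⨅ j, x j t) - x i t) ≤ x' i t ∧ x' i t ≤ B * ((⨆ j, x j t) - x i t)) :
    AntitoneOn (fun t => ⨆ j, x j t) (Set.Ici (0 : ℝ)) ∧
    MonotoneOn (fun t => ⨅ j, x j t) (Set.Ici (0 : ℝ)) ∧
    (∀ i, ∀ t : ℝ, 0 ≤ t → x i t ∈ Set.Icc (⨅ j, x j 0) (⨆ j, x j 0)) ∧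
    (∃ LM : ℝ, Tendsto (fun t => ⨆ j, x j t) atTop (𝓝 LM)) ∧
    (∃ Lm : ℝ, Tendsto (fun t => ⨅ j, x j t) atTop (𝓝 Lm)) :=
  stmt2_general B x x' hint hsol hbound
end

section
/- (Necessity.) Consider a time-invariant network modeled by a digraph D = (V, E) where each normal node updates its value according to ARC-P with parameter f ∈ [0,1/2] under the f-fraction local crash adversary model. If the normal agents achieve continuous-time resilient asymptotic consensus (CTRAC) for every choice of initial values, every f-fraction local set of crash adversaries, and every admissible behavior of those adversaries, then D is f-fraction robust. -/
open Finset Filter Topology MeasureTheory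

namespace ARCP

variable {n : ℕ}

/-- `S` is a `p`-fraction edge reachable set of the digraph with in-neighborhoods `Nin`:
it contains a node `i` with `d_i > 0` and at least `⌈p ⬝ d_i⌉` in-neighbors outside `S`;
by convention, if every node of `S` has all its in-neighbors inside `S`, then `S` is
`0`-fraction edge reachable. -/
def FracEdgeReachable (Nin : Fin n → Finset (Fin n)) (p : ℝ) (S : Finset (Fin n)) : Prop :=
  (∃ i ∈ S, 0 < (Nin i).card ∧ ⌈p * (((Nin i).card : ℝ))⌉₊ ≤ ((Nin i) \ S).card) ∨
    (p = 0 ∧ ∀ i ∈ S, ((Nin i) \ S).card = 0)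

/-- The digraph with in-neighborhoods `Nin` is `p`-fraction robust: for every pair of
nonempty, disjoint subsets of nodes, at least one of them is `p`-fraction edge reachable. -/
def FracRobust (Nin : Fin n → Finset (Fin n)) (p : ℝ) : Prop :=
  ∀ S₁ S₂ : Finset (Fin n), S₁.Nonempty → S₂.Nonempty → Disjoint S₁ S₂ →
    FracEdgeReachable Nin p S₁ ∨ FracEdgeReachable Nin p S₂

end ARCP

/-!
Suppose `S₁` and `S₂` are disjoint, nonempty and neither is `f`-fraction edge reachable: every
node of `Sₖ` has at most `⌊f dᵢ⌋` in-neighbors outside `Sₖ`. Declare the nodes outside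
`S₁ ∪ S₂` crashed at time `0` (an `f`-fraction local set, by the same count), give `S₁` the value
`0` and everything else the value `1`. Each normal node then sees at most `⌊f dᵢ⌋` in-neighbors
whose value differs from its own, so ARC-P may remove all of them and its update vanishes. The
constant trajectory is thus an admissible execution in which `S₁` and `S₂` never agree,
contradicting CTRAC.
-/

theorem Finset.exists_subset_card_eq_forall_le {α β : Type*} [DecidableEq α] [LinearOrder β]
    (s : Finset α) (v : α → β) {k : ℕ} (hk : k ≤ s.card) :
    ∃ R ⊆ s, R.card = k ∧ ∀ j ∈ R, ∀ l ∈ s \ R, v l ≤ v j := by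
  induction k with
  | zero => exact ⟨∅, empty_subset _, card_empty, by simp⟩
  | succ k ih =>
    obtain ⟨R, hRs, hRk, hR⟩ := ih (Nat.le_of_succ_le hk)
    have hne : (s \ R).Nonempty := by
      rw [← card_pos, card_sdiff_of_subset hRs]
      omega
    obtain ⟨m, hm, hmax⟩ := exists_max_image (s \ R) v hne
    have hmR : m ∉ R := (Finset.mem_sdiff.mp hm).2
    refine ⟨insert m R, insert_subset (Finset.mem_sdiff.mp hm).1 hRs,
      by rw [card_insert_of_notMem hmR, hRk], fun j hj l hl => ?_⟩
    have hl' : l ∈ s \ R := by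
      simp only [Finset.mem_sdiff, mem_insert, not_or] at hl ⊢
      exact ⟨hl.1, hl.2.2⟩
    rcases mem_insert.mp hj with rfl | hj
    · exact hmax l hl'
    · exact hR j hj l hl'

namespace ARCP

variable {n : ℕ}

theorem exists_removalHigh (Nin : Finset (Fin n)) (v : Fin n → ℝ) (xi : ℝ) (F : ℕ) :
    ∃ R, RemovalHigh Nin v xi F R := by
  by_cases h : (Nin.filter fun j => xi < v j).card < F
  · exact ⟨_, filter_subset _ _, Or.inl ⟨h, rfl⟩⟩
  · obtain ⟨R, hR, hcard, htop⟩ :=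
      Nin.exists_subset_card_eq_forall_le v ((not_lt.mp h).trans (card_filter_le _ _))
    exact ⟨R, hR, Or.inr ⟨not_lt.mp h, hcard, htop⟩⟩

theorem exists_removalLow (Nin : Finset (Fin n)) (v : Fin n → ℝ) (xi : ℝ) (F : ℕ) :
    ∃ R, RemovalLow Nin v xi F R := by
  by_cases h : (Nin.filter fun j => v j < xi).card < F
  · exact ⟨_, filter_subset _ _, Or.inl ⟨h, rfl⟩⟩
  · obtain ⟨R, hR, hcard, hbot⟩ := Nin.exists_subset_card_eq_forall_le
      (fun j => OrderDual.toDual (v j)) ((not_lt.mp h).trans (card_filter_le _ _))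
    exact ⟨R, hR, Or.inr ⟨not_lt.mp h, hcard, hbot⟩⟩

theorem exists_isARCPRemoval (Nin : Finset (Fin n)) (v : Fin n → ℝ) (xi : ℝ) (F : ℕ) :
    ∃ R, IsARCPRemoval Nin v xi F R := by
  obtain ⟨Rhi, hhi⟩ := exists_removalHigh Nin v xi F
  obtain ⟨Rlo, hlo⟩ := exists_removalLow Nin v xi F
  exact ⟨_, Rhi, Rlo, rfl, hhi, hlo⟩

theorem removalHigh_filter {Nin : Finset (Fin n)} {v : Fin n → ℝ} {xi : ℝ} {F : ℕ}
    (h : (Nin.filter fun j => xi < v j).card ≤ F) :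
    RemovalHigh Nin v xi F (Nin.filter fun j => xi < v j) := by
  refine ⟨filter_subset _ _, ?_⟩
  rcases h.lt_or_eq with hlt | heq
  · exact Or.inl ⟨hlt, rfl⟩
  · refine Or.inr ⟨heq.ge, heq, fun j hj k hk => ?_⟩
    simp only [mem_filter, Finset.mem_sdiff, not_and, not_lt] at hj hk
    exact (hk.2 hk.1).trans hj.2.le

theorem removalLow_filter {Nin : Finset (Fin n)} {v : Fin n → ℝ} {xi : ℝ} {F : ℕ}
    (h : (Nin.filter fun j => v j < xi).card ≤ F) :
    RemovalLow Nin v xi F (Nin.filter fun j => v j < xi) := by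
  refine ⟨filter_subset _ _, ?_⟩
  rcases h.lt_or_eq with hlt | heq
  · exact Or.inl ⟨hlt, rfl⟩
  · refine Or.inr ⟨heq.ge, heq, fun j hj k hk => ?_⟩
    simp only [mem_filter, Finset.mem_sdiff, not_and, not_lt] at hj hk
    exact hj.2.le.trans (hk.2 hk.1)

theorem exists_isARCPRemoval_forall_eq {Nin : Finset (Fin n)} {v : Fin n → ℝ} {xi : ℝ}
    {F : ℕ} (h : (Nin.filter fun j => v j ≠ xi).card ≤ F) :
    ∃ R, IsARCPRemoval Nin v xi F R ∧ ∀ j ∈ Nin \ R, v j = xi := by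
  have hle : ∀ P : ℝ → Prop, [DecidablePred P] → (∀ y, P y → y ≠ xi) →
      (Nin.filter fun j => P (v j)).card ≤ F := fun P _ hP =>
    (card_le_card (monotone_filter_right Nin fun j _ => hP (v j))).trans h
  refine ⟨_, ⟨_, _, rfl, removalHigh_filter (hle _ fun _ => ne_of_gt),
    removalLow_filter (hle _ fun _ => ne_of_lt)⟩, fun j hj => ?_⟩
  simp only [Finset.mem_sdiff, mem_union, mem_filter, not_or, not_and, not_lt] at hj
  exact le_antisymm (hj.2.1 hj.1) (hj.2.2 hj.1)

theorem exists_removal_arcpUpdate_eq_zero (Nin : Fin n → Finset (Fin n)) (F : Fin n → ℕ)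
    (c : Fin n → ℝ) (Normal : Finset (Fin n))
    (h : ∀ i ∈ Normal, ((Nin i).filter fun j => c j ≠ c i).card ≤ F i) :
    ∃ R : Fin n → Finset (Fin n), (∀ i, IsARCPRemoval (Nin i) c (c i) (F i) (R i)) ∧
      ∀ i ∈ Normal, ∀ w, arcpUpdate (Nin i) (R i) w c (c i) = 0 := by
  have hR : ∀ i, ∃ R, IsARCPRemoval (Nin i) c (c i) (F i) R ∧
      (i ∈ Normal → ∀ j ∈ Nin i \ R, c j = c i) := by
    intro i
    by_cases hi : i ∈ Normal
    · obtain ⟨R, hR, heq⟩ := exists_isARCPRemoval_forall_eq (h i hi)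
      exact ⟨R, hR, fun _ => heq⟩
    · obtain ⟨R, hR⟩ := exists_isARCPRemoval (Nin i) c (c i) (F i)
      exact ⟨R, hR, fun hi' => absurd hi' hi⟩
  choose R hR heq using hR
  refine ⟨R, hR, fun i hi w => sum_eq_zero fun j hj => ?_⟩
  rw [heq i hi j hj, sub_self, mul_zero]

theorem card_filter_le_floor_of_not_fracEdgeReachable {Nin : Fin n → Finset (Fin n)} {p : ℝ}
    {S : Finset (Fin n)} (hS : ¬ FracEdgeReachable Nin p S) {i : Fin n} (hi : i ∈ S)
    {P : Fin n → Prop} [DecidablePred P] (hP : ∀ j ∈ Nin i, P j → j ∉ S) :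
    ((Nin i).filter P).card ≤ ⌊p * ((Nin i).card : ℝ)⌋₊ := by
  have hsub : (Nin i).filter P ⊆ Nin i \ S := fun j hj =>
    Finset.mem_sdiff.mpr ⟨(mem_filter.mp hj).1, hP j (mem_filter.mp hj).1 (mem_filter.mp hj).2⟩
  refine (card_le_card hsub).trans ?_
  rcases (Nin i).eq_empty_or_nonempty with hempty | hne
  · simp [hempty]
  · have hlt : (Nin i \ S).card < ⌈p * ((Nin i).card : ℝ)⌉₊ := by
      by_contra! hge
      exact hS (Or.inl ⟨i, hi, hne.card_pos, hge⟩)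
    have := Nat.ceil_le_floor_add_one (p * ((Nin i).card : ℝ))
    omega

end ARCP

theorem stmt3_general {n : ℕ}
    (Nin : Fin n → Finset (Fin n)) (f : ℝ)
    (w : ℝ → Fin n → Fin n → ℝ)
    (H : ∀ (Normal : Finset (Fin n)) (hNe : Normal.Nonempty),
      -- the set of adversaries (the non-normal agents) is f-fraction local
      (∀ i ∈ Normal, ((Nin i).filter fun j => j ∉ Normal).card
          ≤ ⌊f * (((Nin i).card : ℝ))⌋₊) →
      ∀ (x u : Fin n → ℝ → ℝ) (R : ℝ → Fin n → Finset (Fin n)),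
        -- valid ARC-P removal sets (all agents convey their own state in the crash model)
        (∀ t : ℝ, ∀ i : Fin n, ARCP.IsARCPRemoval (Nin i) (fun j => x j t) (x i t)
            (⌊f * (((Nin i).card : ℝ))⌋₊) (R t i)) →
        -- Carathéodory solutions (integral form, with locally integrable inputs)
        (∀ i : Fin n, ∀ t : ℝ, 0 ≤ t → IntervalIntegrable (u i) volume 0 t) →
        (∀ i : Fin n, ∀ t : ℝ, 0 ≤ t → x i t = x i 0 + ∫ s in (0 : ℝ)..t, u i s) →
        -- normal agents follow ARC-P with parameter f for all time
        (∀ i ∈ Normal, ∀ t : ℝ, 0 ≤ t →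
          u i t = ARCP.arcpUpdate (Nin i) (R t i) (fun j => w t j i)
            (fun j => x j t) (x i t)) →
        -- crash adversaries: behave normally until a time t_k of their choosing,
        -- then stop changing their state
        (∀ k : Fin n, k ∉ Normal → ∃ tk : ℝ, 0 ≤ tk ∧
          (∀ t : ℝ, 0 ≤ t → t < tk →
            u k t = ARCP.arcpUpdate (Nin k) (R t k) (fun j => w t j k)
              (fun j => x j t) (x k t)) ∧
          (∀ t : ℝ, tk ≤ t → u k t = 0)) →
        -- CTRAC: agreement and safety
        (∃ L : ℝ, ∀ i ∈ Normal, Tendsto (x i) atTop (𝓝 L)) ∧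
        (∀ i ∈ Normal, ∀ t : ℝ, 0 ≤ t →
          x i t ∈ Set.Icc (Normal.inf' hNe fun j => x j 0)
            (Normal.sup' hNe fun j => x j 0))) :
    ARCP.FracRobust Nin f := by
  intro S₁ S₂ hS₁ hS₂ hdisj
  by_contra! hcon
  obtain ⟨h₁, h₂⟩ := hcon
  obtain ⟨i₁, hi₁⟩ := hS₁
  obtain ⟨i₂, hi₂⟩ := hS₂
  have hi₂₁ : i₂ ∉ S₁ := disjoint_right.mp hdisj hi₂
  let c : Fin n → ℝ := fun i => if i ∈ S₁ then 0 else 1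
  have hlocal : ∀ i ∈ S₁ ∪ S₂, ((Nin i).filter fun j => j ∉ S₁ ∪ S₂).card
      ≤ ⌊f * ((Nin i).card : ℝ)⌋₊ := by
    intro i hi
    rcases mem_union.mp hi with hi | hi
    · exact ARCP.card_filter_le_floor_of_not_fracEdgeReachable h₁ hi
        fun j _ hj hjS => hj (mem_union_left _ hjS)
    · exact ARCP.card_filter_le_floor_of_not_fracEdgeReachable h₂ hi
        fun j _ hj hjS => hj (mem_union_right _ hjS)
  have hfew : ∀ i ∈ S₁ ∪ S₂, ((Nin i).filter fun j => c j ≠ c i).card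
      ≤ ⌊f * ((Nin i).card : ℝ)⌋₊ := by
    intro i hi
    rcases mem_union.mp hi with hi | hi
    · exact ARCP.card_filter_le_floor_of_not_fracEdgeReachable h₁ hi
        fun j _ hj hjS => hj (by simp [c, hi, hjS])
    · have hi' : i ∉ S₁ := disjoint_right.mp hdisj hi
      exact ARCP.card_filter_le_floor_of_not_fracEdgeReachable h₂ hi
        fun j _ hj hjS => hj (by simp [c, hi', disjoint_right.mp hdisj hjS])
  obtain ⟨R, hR, hzero⟩ := ARCP.exists_removal_arcpUpdate_eq_zero Nin _ c _ hfew
  obtain ⟨⟨L, hL⟩, -⟩ := H (S₁ ∪ S₂) ⟨i₁, mem_union_left _ hi₁⟩ hlocal (fun i _ => c i)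
    (fun _ _ => 0) (fun _ => R) (fun _ => hR) (fun _ _ _ => intervalIntegrable_const)
    (fun _ _ _ => by simp) (fun i hi t _ => (hzero i hi _).symm)
    (fun _ _ => ⟨0, le_rfl, fun _ h h' => absurd h (not_le.mpr h'), fun _ _ => rfl⟩)
  have hc : c i₁ = c i₂ :=
    (tendsto_nhds_unique tendsto_const_nhds (hL i₁ (mem_union_left _ hi₁))).trans
      (tendsto_nhds_unique (hL i₂ (mem_union_right _ hi₂)) tendsto_const_nhds)
  simp [c, hi₁, hi₂₁] at hc

/-- Theorem 1 of the paper, necessity: in a time-invariant network where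
every normal node runs ARC-P with parameter `f ∈ [0,1/2]`, if CTRAC is achieved for every
partition into normal nodes and an `f`-fraction local set of crash adversaries, every
choice of initial values, every admissible removal choice, and every admissible crash
behavior, then the digraph is `f`-fraction robust. -/
theorem stmt3 {n : ℕ}
    (Nin : Fin n → Finset (Fin n)) (f : ℝ) (hf : f ∈ Set.Icc (0 : ℝ) (1 / 2))
    (α β : ℝ) (hα : 0 < α) (hαβ : α ≤ β)
    (w : ℝ → Fin n → Fin n → ℝ)
    (hw : ∀ t : ℝ, ∀ i : Fin n, ∀ j ∈ Nin i, α ≤ w t j i ∧ w t j i ≤ β)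
    (H : ∀ (Normal : Finset (Fin n)) (hNe : Normal.Nonempty),
      -- the set of adversaries (the non-normal agents) is f-fraction local
      (∀ i ∈ Normal, ((Nin i).filter fun j => j ∉ Normal).card
          ≤ ⌊f * (((Nin i).card : ℝ))⌋₊) →
      ∀ (x u : Fin n → ℝ → ℝ) (R : ℝ → Fin n → Finset (Fin n)),
        -- valid ARC-P removal sets (all agents convey their own state in the crash model)
        (∀ t : ℝ, ∀ i : Fin n, ARCP.IsARCPRemoval (Nin i) (fun j => x j t) (x i t)
            (⌊f * (((Nin i).card : ℝ))⌋₊) (R t i)) →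
        -- Carathéodory solutions (integral form, with locally integrable inputs)
        (∀ i : Fin n, ∀ t : ℝ, 0 ≤ t → IntervalIntegrable (u i) volume 0 t) →
        (∀ i : Fin n, ∀ t : ℝ, 0 ≤ t → x i t = x i 0 + ∫ s in (0 : ℝ)..t, u i s) →
        -- normal agents follow ARC-P with parameter f for all time
        (∀ i ∈ Normal, ∀ t : ℝ, 0 ≤ t →
          u i t = ARCP.arcpUpdate (Nin i) (R t i) (fun j => w t j i)
            (fun j => x j t) (x i t)) →
        -- crash adversaries: behave normally until a time t_k of their choosing,
        -- then stop changing their state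
        (∀ k : Fin n, k ∉ Normal → ∃ tk : ℝ, 0 ≤ tk ∧
          (∀ t : ℝ, 0 ≤ t → t < tk →
            u k t = ARCP.arcpUpdate (Nin k) (R t k) (fun j => w t j k)
              (fun j => x j t) (x k t)) ∧
          (∀ t : ℝ, tk ≤ t → u k t = 0)) →
        -- CTRAC: agreement and safety
        (∃ L : ℝ, ∀ i ∈ Normal, Tendsto (x i) atTop (𝓝 L)) ∧
        (∀ i ∈ Normal, ∀ t : ℝ, 0 ≤ t →
          x i t ∈ Set.Icc (Normal.inf' hNe fun j => x j 0)
            (Normal.sup' hNe fun j => x j 0))) :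
    ARCP.FracRobust Nin f :=
  stmt3_general Nin f w H
end

section
/- Let D = (V,E) be a time-invariant digraph, f ∈ [0,1/2], and S ⊂ V a nonempty set such that |N_i^in \ S| ≤ ⌊f·d_i⌋ for every i ∈ S. Suppose at some time t every agent in S holds the common value a, and every agent's value lies in the interval [a, b] with a ≤ b. Then for each i ∈ S the ARC-P removal rule with parameter f removes every in-neighbor value strictly greater than a, so the ARC-P update of i at time t is zero. Symmetrically, if every agent in S holds the common value b and every agent's value lies in [a, b], then every in-neighbor value strictly less than b is removed and the ARC-P update of each i ∈ S at time t is zero. -/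
open Finset

/-- if `S` is a nonempty set with `|N_i^in \ S| ≤ ⌊f ⬝ d_i⌋` for all
`i ∈ S`, every agent of `S` holds the common value `a` and all values lie in `[a,b]`,
then for each `i ∈ S` every valid ARC-P removal (with parameter `f`) removes all
in-neighbor values strictly greater than `a`, and the ARC-P update of `i` is zero.
Symmetrically with all agents of `S` holding `b`: every value strictly smaller than `b`
is removed and the update is zero. -/
theorem stmt4 {n : ℕ}
    (Nin : Fin n → Finset (Fin n)) (f : ℝ) (hf : f ∈ Set.Icc (0 : ℝ) (1 / 2))
    (S : Finset (Fin n)) (hS : S.Nonempty)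
    (hSlocal : ∀ i ∈ S, ((Nin i) \ S).card ≤ ⌊f * (((Nin i).card : ℝ))⌋₊)
    (a b : ℝ) (hab : a ≤ b)
    (x : Fin n → ℝ)                       -- the agents' values at time t
    (w : Fin n → Fin n → ℝ)               -- the edge weights at time t
    (hw : ∀ j i : Fin n, 0 ≤ w j i) :
    -- first case: every agent of S holds a
    (((∀ i ∈ S, x i = a) ∧ (∀ i : Fin n, x i ∈ Set.Icc a b)) →
      ∀ i ∈ S, ∀ R : Finset (Fin n),
        ARCP.IsARCPRemoval (Nin i) x (x i) (⌊f * (((Nin i).card : ℝ))⌋₊) R →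
          (∀ j ∈ Nin i, a < x j → j ∈ R) ∧
          ARCP.arcpUpdate (Nin i) R (fun j => w j i) x (x i) = 0) ∧
    -- symmetric case: every agent of S holds b
    (((∀ i ∈ S, x i = b) ∧ (∀ i : Fin n, x i ∈ Set.Icc a b)) →
      ∀ i ∈ S, ∀ R : Finset (Fin n),
        ARCP.IsARCPRemoval (Nin i) x (x i) (⌊f * (((Nin i).card : ℝ))⌋₊) R →
          (∀ j ∈ Nin i, x j < b → j ∈ R) ∧
          ARCP.arcpUpdate (Nin i) R (fun j => w j i) x (x i) = 0) := by
  constructor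
  · rintro ⟨hxa, hbound⟩ i hi R ⟨Rhi, Rlo, rfl, ⟨hsubN, hcases⟩, _⟩
    have hxi : x i = a := hxa i hi
    have hsub : (Nin i).filter (fun j => x i < x j) ⊆ Nin i \ S := by
      intro j hj
      simp only [mem_filter] at hj
      rw [mem_sdiff]
      refine ⟨hj.1, fun hjS => ?_⟩
      have := hxa j hjS
      linarith [hj.2]
    have hcard : ((Nin i).filter (fun j => x i < x j)).card ≤ ⌊f * (((Nin i).card : ℝ))⌋₊ :=
      le_trans (card_le_card hsub) (hSlocal i hi)
    have hmemR : ∀ j ∈ Nin i, a < x j → j ∈ Rhi := by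
      intro j hjN hja
      have hxij : x i < x j := by rw [hxi]; exact hja
      rcases hcases with ⟨_, rfl⟩ | ⟨hge, hcardR, hmax⟩
      · exact mem_filter.2 ⟨hjN, hxij⟩
      · by_contra hjR
        have heq : ((Nin i).filter (fun j => x i < x j)).card = Rhi.card := by omega
        have hns : ¬ Rhi ⊆ (Nin i).filter (fun j => x i < x j) := by
          intro hss
          have := eq_of_subset_of_card_le hss (le_of_eq heq)
          rw [this] at hjR
          exact hjR (mem_filter.2 ⟨hjN, hxij⟩)
        obtain ⟨l, hlR, hlf⟩ := not_subset.1 hns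
        have hlN : l ∈ Nin i := hsubN hlR
        have hxl : ¬ x i < x l := fun h => hlf (mem_filter.2 ⟨hlN, h⟩)
        have := hmax l hlR j (mem_sdiff.2 ⟨hjN, hjR⟩)
        push_neg at hxl
        linarith
    refine ⟨fun j hj hja => mem_union_left _ (hmemR j hj hja), ?_⟩
    apply Finset.sum_eq_zero
    intro j hj
    rw [mem_sdiff] at hj
    have h1 : ¬ a < x j := fun h => hj.2 (mem_union_left _ (hmemR j hj.1 h))
    have h2 : x j = a := le_antisymm (not_lt.1 h1) (hbound j).1
    rw [h2, hxi]
    ring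
  · rintro ⟨hxb, hbound⟩ i hi R ⟨Rhi, Rlo, rfl, _, ⟨hsubN, hcases⟩⟩
    have hxi : x i = b := hxb i hi
    have hsub : (Nin i).filter (fun j => x j < x i) ⊆ Nin i \ S := by
      intro j hj
      simp only [mem_filter] at hj
      rw [mem_sdiff]
      refine ⟨hj.1, fun hjS => ?_⟩
      have := hxb j hjS
      linarith [hj.2]
    have hcard : ((Nin i).filter (fun j => x j < x i)).card ≤ ⌊f * (((Nin i).card : ℝ))⌋₊ :=
      le_trans (card_le_card hsub) (hSlocal i hi)
    have hmemR : ∀ j ∈ Nin i, x j < b → j ∈ Rlo := by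
      intro j hjN hjb
      have hxij : x j < x i := by rw [hxi]; exact hjb
      rcases hcases with ⟨_, rfl⟩ | ⟨hge, hcardR, hmax⟩
      · exact mem_filter.2 ⟨hjN, hxij⟩
      · by_contra hjR
        have heq : ((Nin i).filter (fun j => x j < x i)).card = Rlo.card := by omega
        have hns : ¬ Rlo ⊆ (Nin i).filter (fun j => x j < x i) := by
          intro hss
          have := eq_of_subset_of_card_le hss (le_of_eq heq)
          rw [this] at hjR
          exact hjR (mem_filter.2 ⟨hjN, hxij⟩)
        obtain ⟨l, hlR, hlf⟩ := not_subset.1 hns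
        have hlN : l ∈ Nin i := hsubN hlR
        have hxl : ¬ x l < x i := fun h => hlf (mem_filter.2 ⟨hlN, h⟩)
        have := hmax l hlR j (mem_sdiff.2 ⟨hjN, hjR⟩)
        push_neg at hxl
        linarith
    refine ⟨fun j hj hjb => mem_union_right _ (hmemR j hj hjb), ?_⟩
    apply Finset.sum_eq_zero
    intro j hj
    rw [mem_sdiff] at hj
    have h1 : ¬ x j < b := fun h => hj.2 (mem_union_right _ (hmemR j hj.1 h))
    have h2 : x j = b := le_antisymm (hbound j).2 (not_lt.1 h1)
    rw [h2, hxi]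
    ring
end

section
/- Let B > 0, 0 < Δ < log(3)/B, real numbers A_m < A_M, and 0 < η ≤ (A_M − A_m)/4. Let t ≥ 0 and t' ∈ [t, t+Δ]. Let μ, μ', Μ_0 ∈ ℝ and a function Μ : [t, t'] → ℝ satisfy μ ≤ A_m, μ ≤ μ', Μ_0 ≥ A_M, and A_M ≤ Μ(s) ≤ Μ_0 for all s ∈ [t, t']. Suppose x : [t, t+Δ] → ℝ satisfies x(s) ≥ x(t')·e^{−B(s−t')} + μ'·(1 − e^{−B(s−t')}) for all s ∈ [t', t+Δ], and x(s) ≥ x(t')·e^{B(t'−s)} + Μ(s)·(1 − e^{B(t'−s)}) for all s ∈ [t, t']. If x(t') > Μ_0 − η, then x(s) > μ + η for all s ∈ [t, t+Δ]. -/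
/-- key separation step: with `B > 0`, `0 < Δ < log 3 / B`,
`A_m < A_M`, `0 < η ≤ (A_M - A_m)/4`, `t ≥ 0`, `t' ∈ [t, t+Δ]`, constants
`μ ≤ A_m`, `μ ≤ μ'`, `M₀ ≥ A_M`, a function `Mf` with `A_M ≤ Mf s ≤ M₀` on `[t, t']`,
and a trajectory `x` satisfying the forward and backward exponential bounds, if
`x t' > M₀ - η` then `x s > μ + η` for all `s ∈ [t, t+Δ]`. -/
theorem stmt12 (B Δ A_m A_M η t t' : ℝ)
    (hB : 0 < B) (hΔ0 : 0 < Δ) (hΔ : Δ < Real.log 3 / B)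
    (hA : A_m < A_M) (hη0 : 0 < η) (hη : η ≤ (A_M - A_m) / 4)
    (ht : 0 ≤ t) (ht' : t' ∈ Set.Icc t (t + Δ))
    (μ μ' M₀ : ℝ) (Mf : ℝ → ℝ)
    (hμ : μ ≤ A_m) (hμμ' : μ ≤ μ') (hM₀ : A_M ≤ M₀)
    (hMf : ∀ s ∈ Set.Icc t t', A_M ≤ Mf s ∧ Mf s ≤ M₀)
    (x : ℝ → ℝ)
    (hx1 : ∀ s ∈ Set.Icc t' (t + Δ),
      x t' * Real.exp (-B * (s - t')) + μ' * (1 - Real.exp (-B * (s - t'))) ≤ x s)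
    (hx2 : ∀ s ∈ Set.Icc t t',
      x t' * Real.exp (B * (t' - s)) + Mf s * (1 - Real.exp (B * (t' - s))) ≤ x s)
    (hxt' : M₀ - η < x t') :
    ∀ s ∈ Set.Icc t (t + Δ), μ + η < x s := by
  obtain ⟨ht1, ht2⟩ := ht'
  have hBΔ : B * Δ < Real.log 3 := by
    rw [lt_div_iff₀ hB] at hΔ; linarith [hΔ]
  intro s hs
  obtain ⟨hs1, hs2⟩ := hs
  rcases le_or_gt t' s with hcase | hcase
  · -- forward case
    have hb := hx1 s ⟨hcase, hs2⟩
    set q := Real.exp (-B * (s - t')) with hqdef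
    have hq1 : q ≤ 1 := Real.exp_le_one_iff.mpr (by nlinarith)
    have hq3 : (1:ℝ)/3 < q := by
      have h1 : Real.exp (-(B*Δ)) ≤ q := by
        apply Real.exp_le_exp.mpr; nlinarith
      have h2 : Real.exp (-(B*Δ)) = (Real.exp (B*Δ))⁻¹ := Real.exp_neg _
      have h3 : Real.exp (B*Δ) < 3 := by
        calc Real.exp (B*Δ) < Real.exp (Real.log 3) := Real.exp_lt_exp.mpr hBΔ
        _ = 3 := Real.exp_log (by norm_num)
      have h4 : (1:ℝ)/3 < Real.exp (-(B*Δ)) := by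
        rw [h2, one_div]
        exact inv_strictAnti₀ (Real.exp_pos _) h3
      linarith
    have hxμ : 3 * η < x t' - μ := by nlinarith
    nlinarith [mul_pos (show (0:ℝ) < q - 1/3 by linarith)
        (show (0:ℝ) < x t' - μ by linarith),
      mul_nonneg (show (0:ℝ) ≤ 1 - q by linarith)
        (show (0:ℝ) ≤ μ' - μ by linarith)]
  · -- backward case
    have hb := hx2 s ⟨hs1, hcase.le⟩
    obtain ⟨hMf1, hMf2⟩ := hMf s ⟨hs1, hcase.le⟩
    set E := Real.exp (B * (t' - s)) with hEdef
    have hE1 : 1 ≤ E := Real.one_le_exp (by nlinarith)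
    have hE3 : E < 3 := by
      calc E ≤ Real.exp (B*Δ) := Real.exp_le_exp.mpr (by nlinarith)
      _ < Real.exp (Real.log 3) := Real.exp_lt_exp.mpr hBΔ
      _ = 3 := Real.exp_log (by norm_num)
    rcases le_or_gt (Mf s) (x t') with hy | hy
    · nlinarith [mul_nonneg (Real.exp_pos (B * (t' - s))).le
        (show (0:ℝ) ≤ x t' - Mf s by linarith)]
    · nlinarith [mul_pos (show (0:ℝ) < 3 - E by linarith)
        (show (0:ℝ) < Mf s - x t' by linarith)]
end

section
/- Let B > 0, 0 < Δ < log(3)/B, real numbers A_m < A_M, and 0 < η ≤ (A_M − A_m)/4. Let t ≥ 0 and t' ∈ [t, t+Δ]. Let Μ, Μ', μ_0 ∈ ℝ and a function μ : [t, t'] → ℝ satisfy Μ ≥ A_M, Μ' ≤ Μ, μ_0 ≤ A_m, and μ_0 ≤ μ(s) ≤ A_m for all s ∈ [t, t']. Suppose x : [t, t+Δ] → ℝ satisfies x(s) ≤ x(t')·e^{−B(s−t')} + Μ'·(1 − e^{−B(s−t')}) for all s ∈ [t', t+Δ], and x(s) ≤ x(t')·e^{B(t'−s)} + μ(s)·(1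 − e^{B(t'−s)}) for all s ∈ [t, t']. If x(t') < μ_0 + η, then x(s) < Μ − η for all s ∈ [t, t+Δ]. -/
/-- key separation step, symmetric version: with `B > 0`,
`0 < Δ < log 3 / B`, `A_m < A_M`, `0 < η ≤ (A_M - A_m)/4`, `t ≥ 0`, `t' ∈ [t, t+Δ]`,
constants `M ≥ A_M`, `M' ≤ M`, `μ₀ ≤ A_m`, a function `mf` with `μ₀ ≤ mf s ≤ A_m` on
`[t, t']`, and a trajectory `x` satisfying the forward and backward exponential bounds,
if `x t' < μ₀ + η` then `x s < M - η` for all `s ∈ [t, t+Δ]`. -/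
theorem stmt13 (B Δ A_m A_M η t t' : ℝ)
    (hB : 0 < B) (hΔ0 : 0 < Δ) (hΔ : Δ < Real.log 3 / B)
    (hA : A_m < A_M) (hη0 : 0 < η) (hη : η ≤ (A_M - A_m) / 4)
    (ht : 0 ≤ t) (ht' : t' ∈ Set.Icc t (t + Δ))
    (M M' μ₀ : ℝ) (mf : ℝ → ℝ)
    (hM : A_M ≤ M) (hMM' : M' ≤ M) (hμ₀ : μ₀ ≤ A_m)
    (hmf : ∀ s ∈ Set.Icc t t', μ₀ ≤ mf s ∧ mf s ≤ A_m)
    (x : ℝ → ℝ)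
    (hx1 : ∀ s ∈ Set.Icc t' (t + Δ),
      x s ≤ x t' * Real.exp (-B * (s - t')) + M' * (1 - Real.exp (-B * (s - t'))))
    (hx2 : ∀ s ∈ Set.Icc t t',
      x s ≤ x t' * Real.exp (B * (t' - s)) + mf s * (1 - Real.exp (B * (t' - s))))
    (hxt' : x t' < μ₀ + η) :
    ∀ s ∈ Set.Icc t (t + Δ), x s < M - η := by
  have h3 : Real.exp (B * Δ) < 3 := by
    have hlt : B * Δ < Real.log 3 := by
      have := (lt_div_iff₀ hB).mp hΔ
      linarith [this]
    calc Real.exp (B * Δ) < Real.exp (Real.log 3) := Real.exp_lt_exp.mpr hlt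
      _ = 3 := Real.exp_log (by norm_num)
  have hE3pos : 0 < Real.exp (B * Δ) := Real.exp_pos _
  intro s hs
  rcases le_or_gt t' s with hst | hst
  · -- forward case
    have hb := hx1 s ⟨hst, hs.2⟩
    set E := Real.exp (-B * (s - t')) with hEdef
    have hE0 : 0 < E := Real.exp_pos _
    have hE1 : E ≤ 1 := by
      rw [hEdef]
      apply Real.exp_le_one_iff.mpr
      nlinarith
    have hEprod : 1 ≤ E * Real.exp (B * Δ) := by
      rw [hEdef, ← Real.exp_add]
      have : (0:ℝ) ≤ -B * (s - t') + B * Δ := by nlinarith [ht'.1, hs.2]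
      calc (1:ℝ) = Real.exp 0 := (Real.exp_zero).symm
        _ ≤ _ := Real.exp_le_exp.mpr this
    nlinarith [ht'.1, hs.2, mul_le_mul_of_nonneg_right hMM' (by linarith : (0:ℝ) ≤ 1 - E)]
  · -- backward case
    have hb := hx2 s ⟨hs.1, hst.le⟩
    have hmfs := hmf s ⟨hs.1, hst.le⟩
    set F := Real.exp (B * (t' - s)) with hFdef
    have hF1 : 1 ≤ F := by
      rw [hFdef]
      calc (1:ℝ) = Real.exp 0 := (Real.exp_zero).symm
        _ ≤ _ := Real.exp_le_exp.mpr (by nlinarith)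
    have hF3 : F < 3 := by
      have : F ≤ Real.exp (B * Δ) := by
        rw [hFdef]
        apply Real.exp_le_exp.mpr
        nlinarith [ht'.2, hs.1]
      linarith
    have h1 : mf s * (1 - F) ≤ μ₀ * (1 - F) :=
      mul_le_mul_of_nonpos_right hmfs.1 (by linarith)
    nlinarith [hb, h1]
end
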